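/- Let n ≥ 1, λ ≠ 0, μ ∈ ℕ^{2n} and 1 < p < ∞. Then there is a constant C > 0 such that ‖S_μ^λ φ‖_{L^p(ℝ^n)} ≤ C ‖φ‖_{L^p(ℝ^n)} for every φ ∈ 𝒮(ℝ^n); hence S_μ^λ extends to a bounded linear operator on L^p(ℝ^n). -/

import Mathlib

open MeasureTheory Complex
open scoped Real ENNReal InnerProductSpace

noncomputable section

namespace QuantumHermite

abbrev Rn (n : ℕ) := Fin n → ℝ
abbrev R2n (n : ℕ) := Rn n × Rn n
abbrev Cn (n : ℕ) := Fin n → ℂ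
abbrev C2n (n : ℕ) := Cn n × Cn n

/-- The one-dimensional normalized Hermite function. -/
def herm1 (k : ℕ) (x : ℝ) : ℝ :=
  (-1 : ℝ) ^ k * (Real.pi ^ ((1 : ℝ) / 2) * (k.factorial : ℝ) * 2 ^ k) ^ (-(1 : ℝ) / 2) *
    Real.exp (x ^ 2 / 2) * iteratedDeriv k (fun t : ℝ => Real.exp (-t ^ 2)) x

/-- The normalized Hermite function `Φ_μ` on `ℝ^m`, as a product of one-dimensional
Hermite functions. -/
def hermite {m : ℕ} (μ : Fin m → ℕ) (x : Fin m → ℝ) : ℝ := ∏ j, herm1 (μ j) (x j)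

/-- The scaled Hermite function `Φ_α^λ` on `ℝ^n`. -/
def hermiteScaled (n : ℕ) (lam : ℝ) (α : Fin n → ℕ) (x : Rn n) : ℝ :=
  |lam| ^ ((n : ℝ) / 4) * hermite α (fun j => Real.sqrt |lam| * x j)

/-- `Φ_α^λ` as a complex valued function. -/
def hermiteFunC (n : ℕ) (lam : ℝ) (α : Fin n → ℕ) : Rn n → ℂ :=
  fun x => (hermiteScaled n lam α x : ℂ)

/-- The element of `L²` determined by a function (junk value `0` if the function is not
square integrable). -/
def toL2 {E : Type*} [MeasureSpace E] (f : E → ℂ) : Lp ℂ 2 (volume : Measure E) := by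
  classical exact if h : MemLp f 2 volume then h.toLp f else 0

abbrev Hspace (n : ℕ) := Lp ℂ 2 (volume : Measure (Rn n))

/-- `Φ_α^λ` as an element of `L²(ℝ^n)`. -/
def hermL2 (n : ℕ) (lam : ℝ) (α : Fin n → ℕ) : Hspace n := toL2 (hermiteFunC n lam α)

/-- The pointwise action of the Weyl transform `π_λ(f)` on a function `φ`:
`(π_λ(f)φ)(ξ) = ∫ f(x,u) e^{iλ(x·ξ + x·u/2)} φ(ξ+u) dx du`. -/
def weylAct (n : ℕ) (lam : ℝ) (f : R2n n → ℂ) (φ : Rn n → ℂ) (ξ : Rn n) : ℂ :=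
  ∫ p : R2n n,
    f p * Complex.exp (Complex.I * (lam : ℂ) *
      (((∑ j, p.1 j * ξ j : ℝ) : ℂ) + ((∑ j, p.1 j * p.2 j : ℝ) : ℂ) / 2)) * φ (ξ + p.2)

/-- `c(λ) = (λ/2) coth(λ/2)`. -/
def cLam (lam : ℝ) : ℝ := lam / 2 * (Real.cosh (lam / 2) / Real.sinh (lam / 2))

/-- The function `Ψ_μ^λ` on `ℝ^{2n}`:  `Ψ_μ^λ(ξ) = c(λ)^{n/2} Φ_μ(c(λ)^{1/2} ξ)`. -/
def PsiFun (n : ℕ) (lam : ℝ) (μ : (Fin n → ℕ) × (Fin n → ℕ)) (ξ : R2n n) : ℝ :=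
  cLam lam ^ ((n : ℝ) / 2) *
    (hermite μ.1 (fun j => Real.sqrt (cLam lam) * ξ.1 j) *
      hermite μ.2 (fun j => Real.sqrt (cLam lam) * ξ.2 j))

/-- The pointwise action of `S_μ^λ = π_λ(Ψ_μ^λ)` on a function `φ`. -/
def SAct (n : ℕ) (lam : ℝ) (μ : (Fin n → ℕ) × (Fin n → ℕ)) (φ : Rn n → ℂ) (ξ : Rn n) : ℂ :=
  weylAct n lam (fun p => (PsiFun n lam μ p : ℂ)) φ ξ

/-- `S_μ^λ Φ_α^λ` as an element of `L²(ℝ^n)`. -/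
def SmuApply (n : ℕ) (lam : ℝ) (μ : (Fin n → ℕ) × (Fin n → ℕ)) (α : Fin n → ℕ) : Hspace n :=
  toL2 (SAct n lam μ (hermiteFunC n lam α))

/-- The total degree `|μ|` of a double multi-index. -/
def deg {n : ℕ} (μ : (Fin n → ℕ) × (Fin n → ℕ)) : ℕ := (∑ j, μ.1 j) + ∑ j, μ.2 j

/-- `T` is a Hilbert–Schmidt operator (computed in the orthonormal basis `Φ_α^λ`). -/
def IsHS (n : ℕ) (lam : ℝ) (T : Hspace n →L[ℂ] Hspace n) : Prop :=
  Summable fun α : Fin n → ℕ => ‖T (hermL2 n lam α)‖ ^ 2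

/-- The Hilbert–Schmidt inner product `⟨S,T⟩ = tr(T*S)`, computed in the orthonormal basis
`Φ_α^λ`. -/
def hsInner (n : ℕ) (lam : ℝ) (S T : Hspace n →L[ℂ] Hspace n) : ℂ :=
  ∑' α : Fin n → ℕ, ⟪T (hermL2 n lam α), S (hermL2 n lam α)⟫_ℂ

/-- The Hilbert–Schmidt inner product `⟨T, S_μ^λ⟩ = tr((S_μ^λ)* T)`. -/
def hsCoeff (n : ℕ) (lam : ℝ) (T : Hspace n →L[ℂ] Hspace n)
    (μ : (Fin n → ℕ) × (Fin n → ℕ)) : ℂ :=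
  ∑' α : Fin n → ℕ, ⟪SmuApply n lam μ α, T (hermL2 n lam α)⟫_ℂ

/-- The twisted heat kernel `p_t^λ` on `ℝ^{2n}`. -/
def heatKernel (n : ℕ) (lam t : ℝ) (ξ : R2n n) : ℝ :=
  ((4 * Real.pi)⁻¹) ^ n * lam ^ n * ((Real.sinh (t * lam))⁻¹) ^ n *
    Real.exp (-(lam / 4) * (Real.cosh (t * lam) / Real.sinh (t * lam)) *
      ((∑ j, ξ.1 j ^ 2) + ∑ j, ξ.2 j ^ 2))

/-- The symplectic form `[ξ,η] = u·y − x·v` on `ℝ^{2n}`. -/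
def symp (n : ℕ) (ξ η : R2n n) : ℝ := (∑ j, ξ.2 j * η.1 j) - ∑ j, ξ.1 j * η.2 j

/-- The constant `c_{n,λ} = (4π)^{-n} λ^n (sinh λ)^{-n}`. -/
def cnl (n : ℕ) (lam : ℝ) : ℝ := ((4 * Real.pi)⁻¹) ^ n * lam ^ n * ((Real.sinh lam)⁻¹) ^ n

/-- The linear map `σ_λ` on `ℂ^{2n}`. -/
def sigmaLam (n : ℕ) (lam : ℝ) (ζ : C2n n) : C2n n :=
  (fun j => (Real.sqrt (lam / Real.sinh lam) : ℂ) *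
      ((Real.cosh (lam / 2) : ℂ) * ζ.1 j - Complex.I * (Real.sinh (lam / 2) : ℂ) * ζ.2 j),
   fun j => (Real.sqrt (lam / Real.sinh lam) : ℂ) *
      ((Real.cosh (lam / 2) : ℂ) * ζ.2 j + Complex.I * (Real.sinh (lam / 2) : ℂ) * ζ.1 j))

/-- The annihilation-type operator `A_j(c)ψ = ∂ψ/∂ξ_j + c ξ_j ψ`. -/
def Aop (n : ℕ) (c : ℝ) (j : Fin n) (ψ : Rn n → ℂ) (ξ : Rn n) : ℂ :=
  fderiv ℝ ψ ξ (Pi.single j 1) + ((c * ξ j : ℝ) : ℂ) * ψ ξ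

/-- The creation-type operator `A_j*(c)ψ = −∂ψ/∂ξ_j + c ξ_j ψ`. -/
def AopStar (n : ℕ) (c : ℝ) (j : Fin n) (ψ : Rn n → ℂ) (ξ : Rn n) : ℂ :=
  -fderiv ℝ ψ ξ (Pi.single j 1) + ((c * ξ j : ℝ) : ℂ) * ψ ξ

/-- The momentum operator `P_j φ = ∂φ/∂ξ_j`. -/
def Pop (n : ℕ) (j : Fin n) (φ : Rn n → ℂ) (ξ : Rn n) : ℂ := fderiv ℝ φ ξ (Pi.single j 1)

/-- The position operator `(Q_j φ)(ξ) = ξ_j φ(ξ)`. -/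
def Qop (n : ℕ) (j : Fin n) (φ : Rn n → ℂ) (ξ : Rn n) : ℂ := (ξ j : ℂ) * φ ξ



/-! ### Auxiliary lemmas -/

lemma integrable_pow_mul_gaussian {b : ℝ} (hb : 0 < b) (i : ℕ) :
    Integrable fun x : ℝ => x ^ i * Real.exp (-b * x ^ 2) := by
  have h := integrable_rpow_mul_exp_neg_mul_sq hb (s := (i : ℝ))
    (lt_of_lt_of_le (by norm_num) (Nat.cast_nonneg i))
  simpa [Real.rpow_natCast] using h

lemma integrable_aeval_mul_gaussian (P : Polynomial ℝ) (d : ℝ) {b : ℝ} (hb : 0 < b) :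
    Integrable fun x : ℝ => Polynomial.aeval (d * x) P * Real.exp (-b * x ^ 2) := by
  have h : ∀ x : ℝ, Polynomial.aeval (d * x) P * Real.exp (-b * x ^ 2)
      = ∑ i ∈ Finset.range (P.natDegree + 1),
          (P.coeff i * d ^ i) * (x ^ i * Real.exp (-b * x ^ 2)) := by
    intro x
    rw [Polynomial.aeval_eq_sum_range, Finset.sum_mul]
    refine Finset.sum_congr rfl fun i _ => ?_
    simp only [smul_eq_mul, mul_pow]; ring
  simp only [h]
  exact integrable_finset_sum _ fun i _ => (integrable_pow_mul_gaussian hb i).const_mul _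

def hermConst (k : ℕ) : ℝ :=
  (Real.pi ^ ((1 : ℝ) / 2) * (k.factorial : ℝ) * 2 ^ k) ^ (-(1 : ℝ) / 2) * Real.sqrt 2 ^ k

lemma iteratedDeriv_gauss (k : ℕ) (y : ℝ) :
    iteratedDeriv k (fun t : ℝ => Real.exp (-t ^ 2)) y
      = Real.sqrt 2 ^ k * ((-1 : ℝ) ^ k *
          (Polynomial.aeval (Real.sqrt 2 * y) (Polynomial.hermite k) * Real.exp (-y ^ 2))) := by
  have h2 : (Real.sqrt 2) ^ 2 = 2 := Real.sq_sqrt (by norm_num)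
  have hg : (fun t : ℝ => Real.exp (-t ^ 2))
      = fun t : ℝ => Real.exp (-((Real.sqrt 2 * t) ^ 2 / 2)) := by
    funext t; rw [mul_pow, h2]; ring_nf
  have hc : ContDiff ℝ k (fun y : ℝ => Real.exp (-(y ^ 2 / 2))) := by
    apply Real.contDiff_exp.comp
    exact (((contDiff_id (𝕜 := ℝ)).pow 2).div_const 2).neg
  have key := iteratedDeriv_comp_const_mul (n := k) (f := fun y : ℝ => Real.exp (-(y ^ 2 / 2))) hc
    (Real.sqrt 2)
  rw [hg, key]
  simp only [iteratedDeriv_eq_iterate, Polynomial.deriv_gaussian_eq_hermite_mul_gaussian]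
  rw [mul_pow, h2]
  ring_nf

lemma herm1_eq (k : ℕ) (y : ℝ) :
    herm1 k y = hermConst k *
      Polynomial.aeval (Real.sqrt 2 * y) (Polynomial.hermite k) *
        Real.exp (-(1/2) * y ^ 2) := by
  rw [herm1, iteratedDeriv_gauss, hermConst]
  rw [show Real.exp (-(1/2) * y ^ 2) = Real.exp (y ^ 2 / 2) * Real.exp (-y ^ 2) by
    rw [← Real.exp_add]; ring_nf]
  rcases Nat.even_or_odd k with hk | hk
  · rw [hk.neg_one_pow]; ring
  · rw [hk.neg_one_pow]; ring

lemma continuous_herm1 (k : ℕ) : Continuous (herm1 k) := by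
  have h : herm1 k = fun y => hermConst k *
      Polynomial.aeval (Real.sqrt 2 * y) (Polynomial.hermite k) *
        Real.exp (-(1/2) * y ^ 2) := funext (herm1_eq k)
  rw [h]
  have h1 : Continuous fun y : ℝ => Polynomial.aeval (Real.sqrt 2 * y) (Polynomial.hermite k) :=
    (Polynomial.hermite k).continuous_aeval.comp (continuous_const.mul continuous_id)
  exact (continuous_const.mul h1).mul
    (Real.continuous_exp.comp (continuous_const.mul (continuous_pow 2)))

lemma integrable_herm1_comp (k : ℕ) {a : ℝ} (ha : 0 < a) :
    Integrable fun x : ℝ => herm1 k (a * x) := by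
  have h : ∀ x : ℝ, herm1 k (a * x) = hermConst k *
      (Polynomial.aeval ((Real.sqrt 2 * a) * x) ((Polynomial.hermite k).map (algebraMap ℤ ℝ))
        * Real.exp (-(a ^ 2 / 2) * x ^ 2)) := by
    intro x
    rw [herm1_eq]
    rw [show Real.sqrt 2 * (a * x) = (Real.sqrt 2 * a) * x by ring,
      show -(1/2) * (a * x) ^ 2 = -(a ^ 2 / 2) * x ^ 2 by ring,
      Polynomial.aeval_map_algebraMap]
    ring
  simp only [h]
  exact (integrable_aeval_mul_gaussian _ _ (by positivity)).const_mul _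

lemma cLam_pos {lam : ℝ} (hlam : lam ≠ 0) : 0 < cLam lam := by
  unfold cLam
  rcases lt_or_gt_of_ne hlam with h | h
  · have hs : Real.sinh (lam / 2) < 0 := Real.sinh_neg_iff.2 (by linarith)
    have hc : 0 < Real.cosh (lam / 2) := Real.cosh_pos _
    exact mul_pos_of_neg_of_neg (by linarith) (div_neg_of_pos_of_neg hc hs)
  · have hs : 0 < Real.sinh (lam / 2) := Real.sinh_pos_iff.2 (by linarith)
    have hc : 0 < Real.cosh (lam / 2) := Real.cosh_pos _
    positivity

lemma continuous_hermiteProd (n : ℕ) (α : Fin n → ℕ) (a : ℝ) :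
    Continuous fun x : Rn n => ∏ j, herm1 (α j) (a * x j) :=
  continuous_finset_prod _ fun j _ =>
    (continuous_herm1 (α j)).comp (continuous_const.mul (continuous_apply j))

lemma integrable_hermiteProd (n : ℕ) (α : Fin n → ℕ) {a : ℝ} (ha : 0 < a) :
    Integrable fun x : Rn n => ∏ j, herm1 (α j) (a * x j) :=
  Integrable.fin_nat_prod fun j => integrable_herm1_comp (α j) ha

lemma psiFun_eq (n : ℕ) (lam : ℝ) (μ : (Fin n → ℕ) × (Fin n → ℕ)) :
    PsiFun n lam μ = fun p : R2n n => cLam lam ^ ((n : ℝ) / 2) *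
      ((∏ j, herm1 (μ.1 j) (Real.sqrt (cLam lam) * p.1 j)) *
        (∏ j, herm1 (μ.2 j) (Real.sqrt (cLam lam) * p.2 j))) := rfl

lemma continuous_psiFun (n : ℕ) (lam : ℝ) (μ : (Fin n → ℕ) × (Fin n → ℕ)) :
    Continuous (PsiFun n lam μ) := by
  rw [psiFun_eq]
  exact continuous_const.mul
    (((continuous_hermiteProd n μ.1 _).comp continuous_fst).mul
      ((continuous_hermiteProd n μ.2 _).comp continuous_snd))

lemma integrable_psiFun (n : ℕ) {lam : ℝ} (hlam : lam ≠ 0) (μ : (Fin n → ℕ) × (Fin n → ℕ)) :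
    Integrable (PsiFun n lam μ) := by
  have ha : 0 < Real.sqrt (cLam lam) := Real.sqrt_pos.2 (cLam_pos hlam)
  have h1 := integrable_hermiteProd n μ.1 ha
  have h2 := integrable_hermiteProd n μ.2 ha
  have hprod : Integrable (fun p : R2n n =>
      (∏ j, herm1 (μ.1 j) (Real.sqrt (cLam lam) * p.1 j)) *
        (∏ j, herm1 (μ.2 j) (Real.sqrt (cLam lam) * p.2 j))) (volume : Measure (R2n n)) := by
    rw [Measure.volume_eq_prod]
    exact h1.mul_prod h2
  rw [psiFun_eq]
  exact hprod.const_mul _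

lemma young (n : ℕ) {H G : Rn n → ℝ≥0∞} (hH : Measurable H) (hG : Measurable G)
    {r : ℝ} (hr : 1 < r) :
    (∫⁻ ξ, (∫⁻ u, H u * G (ξ + u)) ^ r) ^ (1/r)
      ≤ (∫⁻ u, H u) * (∫⁻ ξ, G ξ ^ r) ^ (1/r) := by
  set q := Real.conjExponent r with hq
  have hrq : r.HolderConjugate q := Real.HolderConjugate.conjExponent hr
  set A := ∫⁻ u, H u with hA
  set B := ∫⁻ ξ, G ξ ^ r with hB
  have hr0 : (0:ℝ) < r := hrq.pos
  have hq0 : (0:ℝ) < q := hrq.symm.pos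
  have hGr : Measurable fun ξ => G ξ ^ r :=
    ENNReal.continuous_rpow_const.measurable.comp hG
  have key : ∀ ξ : Rn n,
      (∫⁻ u, H u * G (ξ + u)) ≤ A ^ (1/q) * (∫⁻ u, H u * G (ξ + u) ^ r) ^ (1/r) := by
    intro ξ
    have hmeas1 : Measurable fun u : Rn n => G (ξ + u) := hG.comp (measurable_const_add ξ)
    have step1 : (∫⁻ u, H u * G (ξ + u))
        = ∫⁻ u, (H u ^ (1/q)) * ((H u ^ (1/r)) * G (ξ + u)) := by
      refine lintegral_congr fun u => ?_
      rw [← mul_assoc, ← ENNReal.rpow_add_of_nonneg _ _ (by positivity) (by positivity)]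
      rw [show 1/q + 1/r = 1 by
        rw [one_div, one_div]; exact hrq.symm.inv_add_inv_eq_one]
      rw [ENNReal.rpow_one]
    have step2 := ENNReal.lintegral_mul_le_Lp_mul_Lq (volume : Measure (Rn n)) hrq.symm
      (f := fun u => H u ^ (1/q)) (g := fun u => (H u ^ (1/r)) * G (ξ + u))
      (ENNReal.continuous_rpow_const.measurable.comp hH).aemeasurable
      ((ENNReal.continuous_rpow_const.measurable.comp hH).mul hmeas1).aemeasurable
    have e1 : (∫⁻ u, (H u ^ (1/q)) ^ q) = A := by
      rw [hA]
      refine lintegral_congr fun u => ?_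
      rw [← ENNReal.rpow_mul, one_div_mul_cancel hq0.ne', ENNReal.rpow_one]
    have e2 : (∫⁻ u, ((H u ^ (1/r)) * G (ξ + u)) ^ r) = ∫⁻ u, H u * G (ξ + u) ^ r := by
      refine lintegral_congr fun u => ?_
      rw [ENNReal.mul_rpow_of_nonneg _ _ hr0.le, ← ENNReal.rpow_mul,
        one_div_mul_cancel hr0.ne', ENNReal.rpow_one]
    calc (∫⁻ u, H u * G (ξ + u))
        = ∫⁻ u, ((fun u => H u ^ (1/q)) * fun u => (H u ^ (1/r)) * G (ξ + u)) u := by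
          rw [step1]; rfl
      _ ≤ (∫⁻ u, (H u ^ (1/q)) ^ q) ^ (1/q)
            * (∫⁻ u, ((H u ^ (1/r)) * G (ξ + u)) ^ r) ^ (1/r) := step2
      _ = A ^ (1/q) * (∫⁻ u, H u * G (ξ + u) ^ r) ^ (1/r) := by rw [e1, e2]
  have key2 : ∀ ξ, (∫⁻ u, H u * G (ξ + u)) ^ r
      ≤ A ^ (r - 1) * (∫⁻ u, H u * G (ξ + u) ^ r) := by
    intro ξ
    calc (∫⁻ u, H u * G (ξ + u)) ^ r
        ≤ (A ^ (1/q) * (∫⁻ u, H u * G (ξ + u) ^ r) ^ (1/r)) ^ r :=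
          ENNReal.rpow_le_rpow (key ξ) hr0.le
      _ = A ^ (r - 1) * (∫⁻ u, H u * G (ξ + u) ^ r) := by
          rw [ENNReal.mul_rpow_of_nonneg _ _ hr0.le, ← ENNReal.rpow_mul, ← ENNReal.rpow_mul,
            one_div_mul_cancel hr0.ne', ENNReal.rpow_one]
          congr 1
          rw [show 1/q * r = r / q by ring, hrq.div_conj_eq_sub_one]
  have hprodmeas : Measurable fun z : Rn n × Rn n => H z.2 * G (z.1 + z.2) ^ r :=
    (hH.comp measurable_snd).mul (hGr.comp (measurable_fst.add measurable_snd))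
  have swap : (∫⁻ ξ, ∫⁻ u, H u * G (ξ + u) ^ r) = A * B := by
    rw [lintegral_lintegral_swap hprodmeas.aemeasurable]
    have h1 : ∀ u, (∫⁻ ξ, H u * G (ξ + u) ^ r) = H u * B := by
      intro u
      rw [lintegral_const_mul (H u) (f := fun ξ : Rn n => G (ξ + u) ^ r)
        (hGr.comp (measurable_add_const u))]
      congr 1
      exact lintegral_add_right_eq_self (fun ξ => G ξ ^ r) u
    simp_rw [h1]
    exact lintegral_mul_const _ hH
  have hinner : Measurable fun ξ => ∫⁻ u, H u * G (ξ + u) ^ r :=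
    hprodmeas.lintegral_prod_right'
  calc (∫⁻ ξ, (∫⁻ u, H u * G (ξ + u)) ^ r) ^ (1/r)
      ≤ (∫⁻ ξ, A ^ (r - 1) * (∫⁻ u, H u * G (ξ + u) ^ r)) ^ (1/r) :=
        ENNReal.rpow_le_rpow (lintegral_mono key2) (by positivity)
    _ = (A ^ (r - 1) * (A * B)) ^ (1/r) := by rw [lintegral_const_mul _ hinner, swap]
    _ = A * B ^ (1/r) := by
        have hAr : A ^ (r - 1) * A = A ^ r := by
          nth_rewrite 2 [← ENNReal.rpow_one A]
          rw [← ENNReal.rpow_add_of_nonneg _ _ (by linarith) zero_le_one]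
          norm_num
        have h3 : A ^ (r - 1) * (A * B) = A ^ r * B := by
          rw [← mul_assoc, hAr]
        rw [h3, ENNReal.mul_rpow_of_nonneg _ _ (by positivity), ← ENNReal.rpow_mul,
          mul_one_div_cancel hr0.ne', ENNReal.rpow_one]

lemma sact_pointwise (n : ℕ) (lam : ℝ) (μ : (Fin n → ℕ) × (Fin n → ℕ))
    (φ : Rn n → ℂ) (hφ : Continuous φ) (ξ : Rn n) :
    (‖SAct n lam μ φ ξ‖₊ : ℝ≥0∞)
      ≤ ∫⁻ u : Rn n, (∫⁻ x : Rn n, (‖PsiFun n lam μ (x, u)‖₊ : ℝ≥0∞))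
          * (‖φ (ξ + u)‖₊ : ℝ≥0∞) := by
  have hΨmeas : Measurable fun p : R2n n =>
      (‖PsiFun n lam μ p‖₊ : ℝ≥0∞) * (‖φ (ξ + p.2)‖₊ : ℝ≥0∞) :=
    (continuous_psiFun n lam μ).measurable.enorm.mul
      ((hφ.measurable.comp (measurable_const.add measurable_snd)).enorm)
  calc (‖SAct n lam μ φ ξ‖₊ : ℝ≥0∞)
      ≤ ∫⁻ p : R2n n, ‖((PsiFun n lam μ p : ℝ) : ℂ) * Complex.exp (Complex.I * (lam : ℂ) *
          (((∑ j, p.1 j * ξ j : ℝ) : ℂ) + ((∑ j, p.1 j * p.2 j : ℝ) : ℂ) / 2)) *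
            φ (ξ + p.2)‖₊ := enorm_integral_le_lintegral_enorm _
    _ = ∫⁻ p : R2n n, (‖PsiFun n lam μ p‖₊ : ℝ≥0∞) * (‖φ (ξ + p.2)‖₊ : ℝ≥0∞) := by
        refine lintegral_congr fun p => ?_
        have hexp : ‖Complex.exp (Complex.I * (lam : ℂ) *
            (((∑ j, p.1 j * ξ j : ℝ) : ℂ) + ((∑ j, p.1 j * p.2 j : ℝ) : ℂ) / 2))‖ = 1 := by
          rw [show Complex.I * (lam : ℂ) *
              (((∑ j, p.1 j * ξ j : ℝ) : ℂ) + ((∑ j, p.1 j * p.2 j : ℝ) : ℂ) / 2)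
            = ((lam * ((∑ j, p.1 j * ξ j) + (∑ j, p.1 j * p.2 j) / 2) : ℝ) : ℂ) * Complex.I by
              push_cast; ring]
          rw [Complex.norm_exp_ofReal_mul_I]
        have hnorm : ‖((PsiFun n lam μ p : ℝ) : ℂ) * Complex.exp (Complex.I * (lam : ℂ) *
            (((∑ j, p.1 j * ξ j : ℝ) : ℂ) + ((∑ j, p.1 j * p.2 j : ℝ) : ℂ) / 2)) *
              φ (ξ + p.2)‖ = ‖PsiFun n lam μ p‖ * ‖φ (ξ + p.2)‖ := by
          rw [norm_mul, norm_mul, hexp, Complex.norm_real]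
          ring
        simp only [← enorm_eq_nnnorm]
        rw [← ofReal_norm, hnorm, ENNReal.ofReal_mul (norm_nonneg _),
          ofReal_norm, ofReal_norm]
    _ = ∫⁻ u : Rn n, (∫⁻ x : Rn n, (‖PsiFun n lam μ (x, u)‖₊ : ℝ≥0∞))
          * (‖φ (ξ + u)‖₊ : ℝ≥0∞) := by
        rw [Measure.volume_eq_prod, lintegral_prod_symm _ hΨmeas.aemeasurable]
        refine lintegral_congr fun u => ?_
        show (∫⁻ x : Rn n, (‖PsiFun n lam μ (x, u)‖₊ : ℝ≥0∞) * (‖φ (ξ + u)‖₊ : ℝ≥0∞)) = _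
        exact lintegral_mul_const _
          ((continuous_psiFun n lam μ).measurable.enorm.comp
            (measurable_id.prodMk measurable_const))


/-- The operators `S_μ^λ` are bounded on `L^p(ℝ^n)` for `1 < p < ∞`. -/
theorem Smu_Lp_bounded (n : ℕ) (hn : 1 ≤ n) (lam : ℝ) (hlam : lam ≠ 0)
    (μ : (Fin n → ℕ) × (Fin n → ℕ)) (p : ℝ≥0∞) (hp1 : 1 < p) (hp2 : p ≠ ∞) :
    ∃ C : ℝ, 0 < C ∧ ∀ φ : SchwartzMap (Rn n) ℂ,
      eLpNorm (SAct n lam μ ⇑φ) p volume ≤ ENNReal.ofReal C * eLpNorm (⇑φ) p volume := by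
  classical
  have hp0 : p ≠ 0 := (zero_lt_one.trans hp1).ne'
  have hr1 : 1 < p.toReal := by
    rw [← ENNReal.toReal_one]
    exact ENNReal.toReal_strict_mono hp2 hp1
  have hr0 : (0:ℝ) < p.toReal := lt_trans zero_lt_one hr1
  have hΨc : Continuous (PsiFun n lam μ) := continuous_psiFun n lam μ
  have hΨi : Integrable (PsiFun n lam μ) := integrable_psiFun n hlam μ
  set H : Rn n → ℝ≥0∞ := fun u => ∫⁻ x : Rn n, (‖PsiFun n lam μ (x, u)‖₊ : ℝ≥0∞) with hHdef
  have hΨmeas : Measurable fun p : R2n n => (‖PsiFun n lam μ p‖₊ : ℝ≥0∞) :=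
    hΨc.measurable.enorm
  have hHmeas : Measurable H := hΨmeas.lintegral_prod_left'
  have hA_eq : (∫⁻ u, H u) = ∫⁻ p : R2n n, (‖PsiFun n lam μ p‖₊ : ℝ≥0∞) := by
    rw [Measure.volume_eq_prod (Rn n) (Rn n), lintegral_prod_symm _ hΨmeas.aemeasurable]
  have hA_fin : (∫⁻ u, H u) ≠ ⊤ := by
    rw [hA_eq]
    exact hΨi.2.ne
  set A := ∫⁻ u, H u with hAdef
  refine ⟨A.toReal + 1, by positivity, fun φ => ?_⟩
  have hφc : Continuous (⇑φ) := φ.continuous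
  set G : Rn n → ℝ≥0∞ := fun ξ => (‖φ ξ‖₊ : ℝ≥0∞) with hGdef
  have hGmeas : Measurable G := hφc.measurable.enorm
  have hpt : ∀ ξ, (‖SAct n lam μ (⇑φ) ξ‖₊ : ℝ≥0∞) ≤ ∫⁻ u, H u * G (ξ + u) := fun ξ =>
    sact_pointwise n lam μ (⇑φ) hφc ξ
  rw [eLpNorm_eq_lintegral_rpow_enorm_toReal hp0 hp2, eLpNorm_eq_lintegral_rpow_enorm_toReal hp0 hp2]
  have step1 : (∫⁻ ξ, (‖SAct n lam μ (⇑φ) ξ‖₊ : ℝ≥0∞) ^ p.toReal) ^ (1 / p.toReal)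
      ≤ (∫⁻ ξ, (∫⁻ u, H u * G (ξ + u)) ^ p.toReal) ^ (1 / p.toReal) :=
    ENNReal.rpow_le_rpow (lintegral_mono fun ξ =>
      ENNReal.rpow_le_rpow (hpt ξ) hr0.le) (by positivity)
  have step2 := young n hHmeas hGmeas hr1
  have hAle : A ≤ ENNReal.ofReal (A.toReal + 1) := by
    calc A = ENNReal.ofReal A.toReal := (ENNReal.ofReal_toReal hA_fin).symm
      _ ≤ ENNReal.ofReal (A.toReal + 1) := ENNReal.ofReal_le_ofReal (by linarith)
  calc (∫⁻ ξ, (‖SAct n lam μ (⇑φ) ξ‖₊ : ℝ≥0∞) ^ p.toReal) ^ (1 / p.toReal)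
      ≤ (∫⁻ ξ, (∫⁻ u, H u * G (ξ + u)) ^ p.toReal) ^ (1 / p.toReal) := step1
    _ ≤ A * (∫⁻ ξ, G ξ ^ p.toReal) ^ (1 / p.toReal) := step2
    _ ≤ ENNReal.ofReal (A.toReal + 1) * (∫⁻ ξ, (‖φ ξ‖₊ : ℝ≥0∞) ^ p.toReal) ^ (1 / p.toReal) :=
        mul_le_mul_left hAle _


end QuantumHermite
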